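/- Let u, v : ℝ⁵ → ℝ be smooth functions satisfying, at every point of ℝ⁵, the equations u₂ − v₁ = 0 and u₅ + u₃v₄ − u₄v₃ = 0, where subscripts denote partial derivatives with respect to the corresponding coordinate. For λ ∈ ℝ define vector fields X, Y : ℝ⁵ → ℝ⁵ by X(x) = u₃(x)·e₄ − u₄(x)·e₃ + λ·e₁ and Y(x) = e₅ − v₃(x)·e₄ + v₄(x)·e₃ − λ·e₂. Then for every λ ∈ ℝ the Lie bracket [X, Y] vanishes identically on ℝ⁵. -/

import Mathlib

/-- The `i`-th standard basis vector of `ℝ^d` (0-based index). -/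
def stdV (d i : ℕ) : Fin d → ℝ := fun j => if (j : ℕ) = i then 1 else 0

/-- Partial derivative of `f : ℝ^d → ℝ` in the `i`-th coordinate direction (0-based index). -/
noncomputable def pd (d : ℕ) (f : (Fin d → ℝ) → ℝ) (i : ℕ) (x : Fin d → ℝ) : ℝ :=
  fderiv ℝ f x (stdV d i)

/-- Lie bracket of vector fields: `[X,Y](x) = DY(x)(X(x)) - DX(x)(Y(x))`. -/
noncomputable def lieB (d : ℕ) (X Y : (Fin d → ℝ) → (Fin d → ℝ)) (x : Fin d → ℝ) :
    Fin d → ℝ :=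
  fderiv ℝ Y x (X x) - fderiv ℝ X x (Y x)

lemma pd_contDiff {f : (Fin 5 → ℝ) → ℝ} (hf : ContDiff ℝ (⊤ : ℕ∞) f) (i : ℕ) :
    ContDiff ℝ (⊤ : ℕ∞) (pd 5 f i) :=
  (hf.fderiv_right (by exact_mod_cast le_top)).clm_apply contDiff_const

lemma pd_diffAt {f : (Fin 5 → ℝ) → ℝ} (hf : ContDiff ℝ (⊤ : ℕ∞) f) (i : ℕ) (x : Fin 5 → ℝ) :
    DifferentiableAt ℝ (pd 5 f i) x :=
  (pd_contDiff hf i).differentiable (by simp) x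

lemma pd2_symm {f : (Fin 5 → ℝ) → ℝ} (hf : ContDiff ℝ (⊤ : ℕ∞) f) (i j : ℕ) (x : Fin 5 → ℝ) :
    fderiv ℝ (pd 5 f i) x (stdV 5 j) = fderiv ℝ (pd 5 f j) x (stdV 5 i) := by
  have hdf : Differentiable ℝ (fderiv ℝ f) := (hf.fderiv_right (m := ((⊤:ℕ∞) : WithTop ℕ∞)) (by exact_mod_cast le_top)).differentiable (by simp)
  have hsymm := second_derivative_symmetric (f := f) (f' := fderiv ℝ f)
    (f'' := fderiv ℝ (fderiv ℝ f) x)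
    (fun y => (hf.differentiable (by simp) y).hasFDerivAt) (hdf x).hasFDerivAt
  have hv : ∀ w : Fin 5 → ℝ, fderiv ℝ (fun y => fderiv ℝ f y w) x
      = (fderiv ℝ (fderiv ℝ f) x).flip w := by
    intro w
    have := fderiv_clm_apply (hdf x) (differentiableAt_const w)
    simpa using this
  show fderiv ℝ (fun y => fderiv ℝ f y (stdV 5 i)) x (stdV 5 j)
      = fderiv ℝ (fun y => fderiv ℝ f y (stdV 5 j)) x (stdV 5 i)
  rw [hv, hv]
  simpa using hsymm (stdV 5 j) (stdV 5 i)

theorem stmt12 (u v : (Fin 5 → ℝ) → ℝ)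
    (hu : ContDiff ℝ (⊤ : ℕ∞) u) (hv : ContDiff ℝ (⊤ : ℕ∞) v)
    (h1 : ∀ x, pd 5 u 1 x - pd 5 v 0 x = 0)
    (h2 : ∀ x, pd 5 u 4 x + pd 5 u 2 x * pd 5 v 3 x - pd 5 u 3 x * pd 5 v 2 x = 0) :
    ∀ lam : ℝ, ∀ x : Fin 5 → ℝ,
      lieB 5
        (fun y => pd 5 u 2 y • stdV 5 3 - pd 5 u 3 y • stdV 5 2 + lam • stdV 5 0)
        (fun y => stdV 5 4 - pd 5 v 2 y • stdV 5 3 + pd 5 v 3 y • stdV 5 2 - lam • stdV 5 1)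
        x = 0 := by
  intro lam x
  have hu2 := pd_diffAt hu 2 x
  have hu3 := pd_diffAt hu 3 x
  have hu4 := pd_diffAt hu 4 x
  have hv2 := pd_diffAt hv 2 x
  have hv3 := pd_diffAt hv 3 x
  -- h1 as equality of functions
  have h1' : pd 5 u 1 = pd 5 v 0 := funext fun y => by linarith [h1 y]
  -- derivative of h2 in any direction
  have key : ∀ w : Fin 5 → ℝ,
      fderiv ℝ (pd 5 u 4) x w
        + (pd 5 u 2 x * fderiv ℝ (pd 5 v 3) x w + pd 5 v 3 x * fderiv ℝ (pd 5 u 2) x w)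
        - (pd 5 u 3 x * fderiv ℝ (pd 5 v 2) x w + pd 5 v 2 x * fderiv ℝ (pd 5 u 3) x w) = 0 := by
    intro w
    have hder : HasFDerivAt
        (fun y => pd 5 u 4 y + pd 5 u 2 y * pd 5 v 3 y - pd 5 u 3 y * pd 5 v 2 y)
        ((fderiv ℝ (pd 5 u 4) x)
          + (pd 5 u 2 x • fderiv ℝ (pd 5 v 3) x + pd 5 v 3 x • fderiv ℝ (pd 5 u 2) x)
          - (pd 5 u 3 x • fderiv ℝ (pd 5 v 2) x + pd 5 v 2 x • fderiv ℝ (pd 5 u 3) x)) x :=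
      (hu4.hasFDerivAt.add (hu2.hasFDerivAt.mul hv3.hasFDerivAt)).sub
        (hu3.hasFDerivAt.mul hv2.hasFDerivAt)
    have h0 : HasFDerivAt
        (fun y => pd 5 u 4 y + pd 5 u 2 y * pd 5 v 3 y - pd 5 u 3 y * pd 5 v 2 y)
        (0 : (Fin 5 → ℝ) →L[ℝ] ℝ) x := by
      have he : (fun y => pd 5 u 4 y + pd 5 u 2 y * pd 5 v 3 y - pd 5 u 3 y * pd 5 v 2 y)
          = fun _ => (0:ℝ) := funext fun y => h2 y
      rw [he]; exact hasFDerivAt_const 0 x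
    have := hder.unique h0
    have := congrArg (fun L : (Fin 5 → ℝ) →L[ℝ] ℝ => L w) this
    simpa [ContinuousLinearMap.add_apply, ContinuousLinearMap.sub_apply,
      ContinuousLinearMap.smul_apply, smul_eq_mul] using this
  have E2 := key (stdV 5 2)
  have E3 := key (stdV 5 3)
  -- derivatives of the vector fields
  have hX : fderiv ℝ (fun y => pd 5 u 2 y • stdV 5 3 - pd 5 u 3 y • stdV 5 2 + lam • stdV 5 0) x
      = (fderiv ℝ (pd 5 u 2) x).smulRight (stdV 5 3)
        - (fderiv ℝ (pd 5 u 3) x).smulRight (stdV 5 2) := by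
    rw [fderiv_add_const, fderiv_fun_sub (hu2.smul_const _) (hu3.smul_const _),
      fderiv_smul_const hu2, fderiv_smul_const hu3]
  have hY : fderiv ℝ (fun y => stdV 5 4 - pd 5 v 2 y • stdV 5 3 + pd 5 v 3 y • stdV 5 2
        - lam • stdV 5 1) x
      = (fderiv ℝ (pd 5 v 3) x).smulRight (stdV 5 2)
        - (fderiv ℝ (pd 5 v 2) x).smulRight (stdV 5 3) := by
    rw [fderiv_sub_const, fderiv_fun_add (f := fun y => stdV 5 4 - pd 5 v 2 y • stdV 5 3) ((differentiableAt_const _).sub (hv2.smul_const _))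
      (hv3.smul_const _), fderiv_const_sub _,
      fderiv_smul_const hv2, fderiv_smul_const hv3]
    abel
  show fderiv ℝ _ x _ - fderiv ℝ _ x _ = 0
  rw [hX, hY]
  funext j
  simp only [ContinuousLinearMap.sub_apply, ContinuousLinearMap.smulRight_apply,
    map_add, map_sub, map_smul, smul_eq_mul, Pi.sub_apply, Pi.add_apply, Pi.smul_apply,
    Pi.zero_apply, stdV]
  fin_cases j <;>
    simp only [Fin.isValue, Fin.val_zero, Fin.val_one] <;>
    norm_num
  · -- j = 2 component
    have hd1 : fderiv ℝ (pd 5 u 1) x = fderiv ℝ (pd 5 v 0) x := by rw [h1']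
    rw [pd2_symm hv 3 2 x, pd2_symm hv 3 0 x, pd2_symm hu 3 4 x, pd2_symm hu 3 2 x,
      pd2_symm hu 3 1 x, hd1]
    linear_combination E3
  · have hd1 : fderiv ℝ (pd 5 u 1) x = fderiv ℝ (pd 5 v 0) x := by rw [h1']
    rw [pd2_symm hv 2 3 x, pd2_symm hv 2 0 x, pd2_symm hu 2 4 x, pd2_symm hu 2 3 x,
      pd2_symm hu 2 1 x, hd1]
    linear_combination -E2
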